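/- arXiv:2407.03099 — 4 statements merged into one kernel-verified Lean document; each statement's English description precedes it below -/
import Mathlib

section
/- For every excursion ((a_i,b_i))_{i=0}^{s} of the BCZ map, |Σ_{m=0}^{s−1} (k̂(a_m,b_m) − 3)| < a_s/a_0 + a_0/a_s. -/
/-- The BCZ map `T(a,b) = (b, ⌊(1+a)/b⌋·b − a)`. -/
noncomputable def bczT (p : ℝ × ℝ) : ℝ × ℝ :=
  (p.2, (⌊(1 + p.1) / p.2⌋ : ℝ) * p.2 - p.1)

/-- `k̂(a,b) = (⌊(1+a)/b⌋ + ⌊(1+b)/a⌋)/2`. -/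
noncomputable def khat (p : ℝ × ℝ) : ℝ :=
  ((⌊(1 + p.1) / p.2⌋ : ℝ) + (⌊(1 + p.2) / p.1⌋ : ℝ)) / 2

/-- The Farey triangle Ω. -/
def fareyTriangle : Set (ℝ × ℝ) :=
  {p | 0 < p.1 ∧ p.1 ≤ 1 ∧ 0 < p.2 ∧ p.2 ≤ 1 ∧ 1 < p.1 + p.2}

/-- An excursion of the BCZ map: points `p 0, …, p s` of Ω, consecutive under `T`,
with all intermediate x-coordinates larger than those of both endpoints. -/
def IsExcursion (p : ℕ → ℝ × ℝ) (s : ℕ) : Prop :=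
  1 ≤ s ∧ (∀ i ≤ s, p i ∈ fareyTriangle) ∧
  (∀ i < s, p (i + 1) = bczT (p i)) ∧
  (∀ i, 0 < i → i < s → (p 0).1 < (p i).1 ∧ (p s).1 < (p i).1)

/-- The golden ratio area Δ of the moduli space of excursions. -/
noncomputable def goldenArea : Set (ℝ × ℝ) :=
  {p | 0 < p.1 ∧ p.1 ≤ 1 ∧ 0 < p.2 ∧ p.2 ≤ 1 ∧
    (Real.sqrt 5 - 1) / 2 ≤ p.2 / p.1 ∧ p.2 / p.1 ≤ (Real.sqrt 5 + 1) / 2}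

/-- `A_n = Σ_{k=1}^n φ(k)`, the number of Farey fractions in `(0,1]` of order `n`. -/
def fareyLen (n : ℕ) : ℕ := ∑ k ∈ Finset.Icc 1 n, Nat.totient k

/-! Along an orbit `a_{i+1} = b_i` and `a_i + a_{i+2} = k_i a_{i+1}`, so that
`k̂(a_i,b_i) - 3 = F(a_i, a_{i+1}) + e(a_{i+1}, b_{i+1}) - e(a_i, b_i)` with
`F(u,w) = w/u + u/w - 3` and `e(a,b) = b/a - k(b,a)/2`; this uses `k(b',a') = k(a,b)` for
`(a',b') = T(a,b)`, the reversibility of `T`. On `Ω` one has `|e| < 1/2`.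

`F` is additive under mediants: `F(u, u+w) + F(u+w, w) = F(u,w)`. On an excursion the largest
interior `a_i` is the mediant of its neighbours (the integer `k_{i-1}` is squeezed into `(0,2)`),
and deleting it leaves a shorter sequence of the same kind. By induction
`Σ F(a_i, a_{i+1}) = F(a_0, a_s)`, and `F(a_0,a_s) + 3 = a_s/a_0 + a_0/a_s ≥ 2` absorbs the error
`e(p_s) - e(p_0) ∈ (-1,1)`.
-/

def skipIndex (k i : ℕ) : ℕ := if i < k then i else i + 1

lemma skipIndex_of_lt {k i : ℕ} (h : i < k) : skipIndex k i = i := if_pos h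

lemma skipIndex_of_le {k i : ℕ} (h : k ≤ i) : skipIndex k i = i + 1 :=
  if_neg (Nat.not_lt.2 h)

lemma sum_range_comp_skipIndex {α M : Type*} [AddCommMonoid M] (g : α → α → M)
    (c : ℕ → α) {m n : ℕ} (hmn : m ≤ n)
    (hmerge : g (c m) (c (m + 1)) + g (c (m + 1)) (c (m + 2)) = g (c m) (c (m + 2))) :
    ∑ i ∈ Finset.range (n + 2), g (c i) (c (i + 1)) =
      ∑ i ∈ Finset.range (n + 1),
        g (c (skipIndex (m + 1) i)) (c (skipIndex (m + 1) (i + 1))) := by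
  induction n, hmn using Nat.le_induction with
  | base =>
    have hlow : ∀ i ∈ Finset.range m,
        g (c (skipIndex (m + 1) i)) (c (skipIndex (m + 1) (i + 1))) = g (c i) (c (i + 1)) :=
      fun i hi => by
      have := Finset.mem_range.1 hi
      rw [skipIndex_of_lt (by omega), skipIndex_of_lt (by omega)]
    rw [Finset.sum_range_succ, Finset.sum_range_succ, Finset.sum_range_succ,
      Finset.sum_congr rfl hlow, skipIndex_of_lt (by omega), skipIndex_of_le le_rfl, add_assoc,
      hmerge]
  | succ n hmn ih =>
    rw [Finset.sum_range_succ, ih, Finset.sum_range_succ _ (n + 1), skipIndex_of_le (by omega),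
      skipIndex_of_le (by omega)]

structure IsExcursionSeq (c : ℕ → ℝ) (t : ℕ) : Prop where
  pos : ∀ i ≤ t, 0 < c i
  lt_of_interior : ∀ i, 0 < i → i < t → c 0 < c i ∧ c t < c i
  exists_add_eq_mul : ∀ i, i + 2 ≤ t → ∃ K : ℤ, c i + c (i + 2) = K * c (i + 1)

namespace IsExcursionSeq

variable {c : ℕ → ℝ} {t : ℕ}

lemma exists_mediant (hc : IsExcursionSeq c t) (ht : 2 ≤ t) :
    ∃ m, m + 2 ≤ t ∧ c (m + 1) = c m + c (m + 2) := by
  classical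
  obtain ⟨j, hj, hjmax⟩ :=
    (Finset.Ioo 0 t).exists_max_image c ⟨1, Finset.mem_Ioo.2 ⟨one_pos, ht⟩⟩
  rw [Finset.mem_Ioo] at hj
  have hex : ∃ m, m + 1 < t ∧ c j ≤ c (m + 1) :=
    ⟨j - 1, by omega, by rw [Nat.sub_add_cancel hj.1]⟩
  obtain ⟨hmt, hjm⟩ := Nat.find_spec hex
  have hmin : ∀ k < Nat.find hex, ¬(k + 1 < t ∧ c j ≤ c (k + 1)) := fun k => Nat.find_min hex
  generalize Nat.find hex = m at hmt hjm hmin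
  have hmax : ∀ i, 0 < i → i < t → c i ≤ c (m + 1) := fun i hi hit =>
    (hjmax i (Finset.mem_Ioo.2 ⟨hi, hit⟩)).trans hjm
  have hleft : c m < c (m + 1) := by
    rcases m with _ | m
    · exact (hc.lt_of_interior 1 one_pos hmt).1
    · exact (lt_of_not_ge fun h => hmin m (by omega) ⟨by omega, h⟩).trans_le hjm
  have hright : c (m + 2) ≤ c (m + 1) := by
    rcases (show m + 2 < t ∨ m + 2 = t by omega) with h | h
    · exact hmax _ (by omega) h
    · exact h ▸ (hc.lt_of_interior (m + 1) (by omega) hmt).2.le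
  obtain ⟨K, hK⟩ := hc.exists_add_eq_mul m (by omega)
  have hpos : 0 < c (m + 1) := hc.pos _ hmt.le
  have hK1 : K = 1 := by
    have h0 : (0 : ℝ) < K := by nlinarith [hc.pos m (by omega), hc.pos (m + 2) (by omega)]
    have h2 : (K : ℝ) < 2 := by nlinarith
    have : 0 < K ∧ K < 2 := ⟨by exact_mod_cast h0, by exact_mod_cast h2⟩
    omega
  refine ⟨m, by omega, ?_⟩
  rw [hK, hK1, Int.cast_one, one_mul]

lemma comp_skipIndex {n m : ℕ} (hc : IsExcursionSeq c (n + 2)) (hmn : m ≤ n)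
    (hmed : c (m + 1) = c m + c (m + 2)) : IsExcursionSeq (c ∘ skipIndex (m + 1)) (n + 1) where
  pos i hi := hc.pos _ (by unfold skipIndex; split_ifs <;> omega)
  lt_of_interior i hi hin := by
    have := hc.lt_of_interior (skipIndex (m + 1) i) (by unfold skipIndex; split_ifs <;> omega)
      (by unfold skipIndex; split_ifs <;> omega)
    simpa only [Function.comp_apply, skipIndex_of_lt (Nat.succ_pos m),
      skipIndex_of_le (show m + 1 ≤ n + 1 by omega)] using this
  exists_add_eq_mul i hi := by
    simp only [Function.comp_apply]
    obtain h | h | h | h : i + 2 ≤ m ∨ i + 1 = m ∨ i = m ∨ m < i := by omega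
    · rw [skipIndex_of_lt (show i < m + 1 by omega),
        skipIndex_of_lt (show i + 1 < m + 1 by omega),
        skipIndex_of_lt (show i + 2 < m + 1 by omega)]
      exact hc.exists_add_eq_mul i (by omega)
    · obtain ⟨K, hK⟩ := hc.exists_add_eq_mul i (by omega)
      rw [skipIndex_of_lt (show i < m + 1 by omega),
        skipIndex_of_lt (show i + 1 < m + 1 by omega),
        skipIndex_of_le (show m + 1 ≤ i + 2 by omega)]
      subst h
      exact ⟨K - 1, by push_cast; linarith⟩
    · obtain ⟨K, hK⟩ := hc.exists_add_eq_mul (i + 1) (by omega)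
      rw [skipIndex_of_lt (show i < m + 1 by omega),
        skipIndex_of_le (show m + 1 ≤ i + 1 by omega),
        skipIndex_of_le (show m + 1 ≤ i + 2 by omega)]
      subst h
      exact ⟨K - 1, by push_cast; linarith⟩
    · rw [skipIndex_of_le (show m + 1 ≤ i by omega),
        skipIndex_of_le (show m + 1 ≤ i + 1 by omega),
        skipIndex_of_le (show m + 1 ≤ i + 2 by omega)]
      exact hc.exists_add_eq_mul (i + 1) (by omega)

theorem sum_eq {M : Type*} [AddCommMonoid M] {g : ℝ → ℝ → M}
    (hg : ∀ u w, 0 < u → 0 < w → g u (u + w) + g (u + w) w = g u w)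
    (hc : IsExcursionSeq c t) (ht : 1 ≤ t) :
    ∑ i ∈ Finset.range t, g (c i) (c (i + 1)) = g (c 0) (c t) := by
  induction t using Nat.strong_induction_on generalizing c with
  | _ t ih =>
  rcases t with _ | _ | n
  · omega
  · rw [Finset.sum_range_one]
  obtain ⟨m, hm, hmed⟩ := hc.exists_mediant (by omega)
  have hmerge : g (c m) (c (m + 1)) + g (c (m + 1)) (c (m + 2)) = g (c m) (c (m + 2)) := by
    rw [hmed]; exact hg _ _ (hc.pos m (by omega)) (hc.pos (m + 2) hm)
  rw [sum_range_comp_skipIndex g c (by omega : m ≤ n) hmerge]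
  have := ih (n + 1) (by omega) (hc.comp_skipIndex (by omega) hmed) (by omega)
  simpa only [Function.comp_apply, skipIndex_of_lt (Nat.succ_pos m),
    skipIndex_of_le (show m + 1 ≤ n + 1 by omega)] using this

end IsExcursionSeq

noncomputable def ratioExcess (u w : ℝ) : ℝ := w / u + u / w - 3

lemma ratioExcess_mediant {u w : ℝ} (hu : 0 < u) (hw : 0 < w) :
    ratioExcess u (u + w) + ratioExcess (u + w) w = ratioExcess u w := by
  unfold ratioExcess
  field_simp
  ring

lemma abs_ratioExcess_add_lt {u w d : ℝ} (hu : 0 < u) (hw : 0 < w) (hd : |d| < 1) :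
    |ratioExcess u w + d| < w / u + u / w := by
  have h2 : 2 ≤ w / u + u / w := by
    rw [div_add_div _ _ hu.ne' hw.ne', le_div_iff₀ (by positivity)]
    nlinarith [sq_nonneg (w - u)]
  rw [abs_lt] at hd ⊢
  unfold ratioExcess
  constructor <;> linarith

noncomputable def itinerary (q : ℝ × ℝ) : ℤ := ⌊(1 + q.1) / q.2⌋

noncomputable def slopeOffset (q : ℝ × ℝ) : ℝ := q.2 / q.1 - itinerary q.swap / 2

lemma bczT_eq (q : ℝ × ℝ) : bczT q = (q.2, itinerary q * q.2 - q.1) := rfl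

lemma khat_eq (q : ℝ × ℝ) : khat q = (itinerary q + itinerary q.swap) / 2 := rfl

lemma itinerary_swap_bczT {q : ℝ × ℝ} (hq : q ∈ fareyTriangle) :
    itinerary (bczT q).swap = itinerary q := by
  obtain ⟨-, ha1, hb, -, hab⟩ := hq
  have hsplit : (1 + (itinerary q * q.2 - q.1)) / q.2 = itinerary q + (1 - q.1) / q.2 := by
    field_simp
    ring
  have hfrac : ⌊(1 - q.1) / q.2⌋ = 0 :=
    Int.floor_eq_zero_iff.2 ⟨div_nonneg (by linarith) hb.le, (div_lt_one hb).2 (by linarith)⟩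
  rw [bczT_eq, itinerary, Prod.fst_swap, Prod.snd_swap, hsplit, Int.floor_intCast_add, hfrac,
    add_zero]

lemma abs_slopeOffset_lt {q : ℝ × ℝ} (hq : q ∈ fareyTriangle) : |slopeOffset q| < 1 / 2 := by
  obtain ⟨ha, -, -, hb1, hab⟩ := hq
  have hlo : (itinerary q.swap : ℝ) * q.1 ≤ 1 + q.2 := (le_div_iff₀ ha).1 (Int.floor_le _)
  have hhi : 1 + q.2 < (itinerary q.swap + 1) * q.1 :=
    (div_lt_iff₀ ha).1 (Int.lt_floor_add_one _)
  rw [slopeOffset, abs_lt, lt_sub_iff_add_lt, sub_lt_iff_lt_add, lt_div_iff₀ ha, div_lt_iff₀ ha]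
  constructor <;> nlinarith

lemma khat_sub_three {q : ℝ × ℝ} (hq : q ∈ fareyTriangle) :
    khat q - 3 = ratioExcess q.1 (bczT q).1 + (slopeOffset (bczT q) - slopeOffset q) := by
  have ha : q.1 ≠ 0 := hq.1.ne'
  have hb : q.2 ≠ 0 := hq.2.2.1.ne'
  rw [khat_eq, slopeOffset, slopeOffset, itinerary_swap_bczT hq, ratioExcess, bczT_eq]
  field_simp
  ring

lemma IsExcursion.isExcursionSeq {p : ℕ → ℝ × ℝ} {s : ℕ} (h : IsExcursion p s) :
    IsExcursionSeq (fun i => (p i).1) s where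
  pos i hi := (h.2.1 i hi).1
  lt_of_interior := h.2.2.2
  exists_add_eq_mul i hi := by
    refine ⟨itinerary (p i), ?_⟩
    rw [h.2.2.1 (i + 1) (by omega), h.2.2.1 i (by omega), bczT_eq, bczT_eq]
    ring

theorem abs_reset_control (p : ℕ → ℝ × ℝ) (s : ℕ) (h : IsExcursion p s) :
    |∑ m ∈ Finset.range s, (khat (p m) - 3)| < (p s).1 / (p 0).1 + (p 0).1 / (p s).1 := by
  have hc := h.isExcursionSeq
  obtain ⟨hs, hΩ, hT, -⟩ := h
  have hsum : ∑ m ∈ Finset.range s, (khat (p m) - 3) =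
      ratioExcess (p 0).1 (p s).1 + (slopeOffset (p s) - slopeOffset (p 0)) := by
    rw [← hc.sum_eq (fun _ _ => ratioExcess_mediant) hs,
      ← Finset.sum_range_sub (fun m => slopeOffset (p m)), ← Finset.sum_add_distrib]
    refine Finset.sum_congr rfl fun m hm => ?_
    have hm := Finset.mem_range.1 hm
    rw [hT m hm, khat_sub_three (hΩ m hm.le)]
  rw [hsum]
  refine abs_ratioExcess_add_lt (hΩ 0 (Nat.zero_le _)).1 (hΩ s le_rfl).1 ?_
  have h0 := abs_slopeOffset_lt (hΩ 0 (Nat.zero_le _))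
  have hs := abs_slopeOffset_lt (hΩ s le_rfl)
  calc |slopeOffset (p s) - slopeOffset (p 0)| ≤ |slopeOffset (p s)| + |slopeOffset (p 0)| :=
        abs_sub _ _
    _ < 1 := by linarith
end

section
/- (Closure of the space of generalized arithmetic sequences.) Let (a_1,…,a_n) be a generalized arithmetic sequence with n ≥ 3, and let m with 2 ≤ m ≤ n−1 be such that a_m > a_{m−1} and a_m > a_{m+1}. Then the sequence (a_1,…,a_{m−1},a_{m+1},…,a_n) obtained by deleting a_m is again a generalized arithmetic sequence. -/
/-- A generalized arithmetic sequence `(a 1, …, a n)` of positive reals: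
each interior term divides the sum of its two neighbors. -/
def IsGAS (n : ℕ) (a : ℕ → ℝ) : Prop :=
  (∀ i, 1 ≤ i → i ≤ n → 0 < a i) ∧
  (∀ i, 2 ≤ i → i + 1 ≤ n → ∃ c : ℕ+, a (i - 1) + a (i + 1) = (c : ℝ) * a i)

/-!
At a strict local maximum `a m` the positive integer `c` with `a (m-1) + a (m+1) = c * a m`
must be `1`, so `a m = a (m-1) + a (m+1)`. Substituting this into the relations at the two
neighbours lowers their multipliers by exactly one, and these stay positive because the
new neighbour sums are positive.
-/

theorem add_eq_of_eq_pnat_mul_of_lt {x y z : ℝ} {c : ℕ+} (hz : 0 ≤ z)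
    (h : x + y = c * z) (hx : x < z) (hy : y < z) : x + y = z := by
  obtain hc | hc := (one_le : 1 ≤ c).eq_or_lt
  · rw [h, ← hc, PNat.one_coe, Nat.cast_one, one_mul]
  · have h2 : (2 : ℝ) ≤ c := by exact_mod_cast hc
    nlinarith

theorem exists_pnat_add_eq_mul_of_add_add_self {x y z : ℝ} {d : ℕ+} (hxy : 0 < x + y)
    (hz : 0 < z) (h : x + y + z = d * z) : ∃ d' : ℕ+, x + y = d' * z := by
  have hd : 1 < (d : ℕ) := by
    have : (1 : ℝ) < d := by nlinarith
    exact_mod_cast this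
  refine ⟨⟨(d : ℕ) - 1, by omega⟩, ?_⟩
  rw [PNat.mk_coe, Nat.cast_sub hd.le, Nat.cast_one]
  linarith

def deleteAt (a : ℕ → ℝ) (m : ℕ) : ℕ → ℝ := fun i => if i < m then a i else a (i + 1)

theorem deleteAt_of_lt {a : ℕ → ℝ} {m i : ℕ} (h : i < m) : deleteAt a m i = a i :=
  if_pos h

theorem deleteAt_of_le {a : ℕ → ℝ} {m i : ℕ} (h : m ≤ i) : deleteAt a m i = a (i + 1) :=
  if_neg (Nat.not_lt.mpr h)

namespace IsGAS

variable {n : ℕ} {a : ℕ → ℝ}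

theorem pos_deleteAt (h : IsGAS n a) (m : ℕ) {i : ℕ} (hi : 1 ≤ i) (hin : i ≤ n - 1) :
    0 < deleteAt a m i := by
  rcases lt_or_ge i m with him | him
  · rw [deleteAt_of_lt him]; exact h.1 i hi (by omega)
  · rw [deleteAt_of_le him]; exact h.1 (i + 1) (by omega) (by omega)

theorem step_deleteAt_of_succ_lt (h : IsGAS n a) {m i : ℕ} (hi : 2 ≤ i) (him : i + 1 < m)
    (hin : i + 1 ≤ n) : ∃ c : ℕ+,
      deleteAt a m (i - 1) + deleteAt a m (i + 1) = c * deleteAt a m i := by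
  rw [deleteAt_of_lt (by omega), deleteAt_of_lt him, deleteAt_of_lt (by omega)]
  exact h.2 i hi hin

theorem step_deleteAt_of_lt (h : IsGAS n a) {m i : ℕ} (him : m < i) (hin : i + 2 ≤ n) :
    ∃ c : ℕ+, deleteAt a m (i - 1) + deleteAt a m (i + 1) = c * deleteAt a m i := by
  rw [deleteAt_of_le (by omega), deleteAt_of_le (by omega), deleteAt_of_le him.le,
    Nat.sub_add_cancel (by omega)]
  exact h.2 (i + 1) (by omega) hin

theorem step_deleteAt_pred (h : IsGAS n a) {m : ℕ} (hm : 3 ≤ m) (hmn : m + 1 ≤ n)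
    (hpeak : a (m - 1) + a (m + 1) = a m) : ∃ c : ℕ+,
      deleteAt a m (m - 1 - 1) + deleteAt a m (m - 1 + 1) = c * deleteAt a m (m - 1) := by
  rw [deleteAt_of_lt (by omega), Nat.sub_add_cancel (by omega), deleteAt_of_le le_rfl,
    deleteAt_of_lt (by omega)]
  obtain ⟨d, hd⟩ := h.2 (m - 1) (by omega) (by omega)
  rw [Nat.sub_add_cancel (by omega)] at hd
  refine exists_pnat_add_eq_mul_of_add_add_self (d := d) ?_ (h.1 _ (by omega) (by omega)) ?_
  · linarith [h.1 (m - 1 - 1) (by omega) (by omega), h.1 (m + 1) (by omega) hmn]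
  · linarith

theorem step_deleteAt_self (h : IsGAS n a) {m : ℕ} (hm : 2 ≤ m) (hmn : m + 2 ≤ n)
    (hpeak : a (m - 1) + a (m + 1) = a m) : ∃ c : ℕ+,
      deleteAt a m (m - 1) + deleteAt a m (m + 1) = c * deleteAt a m m := by
  rw [deleteAt_of_lt (by omega), deleteAt_of_le (by omega), deleteAt_of_le le_rfl]
  obtain ⟨d, hd⟩ := h.2 (m + 1) (by omega) hmn
  rw [Nat.add_sub_cancel] at hd
  refine exists_pnat_add_eq_mul_of_add_add_self (d := d) ?_ (h.1 _ (by omega) (by omega)) ?_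
  · linarith [h.1 (m - 1) (by omega) (by omega), h.1 (m + 1 + 1) (by omega) hmn]
  · linarith

end IsGAS

theorem gas_closure_general (n : ℕ) (a : ℕ → ℝ) (h : IsGAS n a)
    (m : ℕ) (hm1 : 2 ≤ m) (hm2 : m + 1 ≤ n)
    (hmax₁ : a (m - 1) < a m) (hmax₂ : a (m + 1) < a m) :
    IsGAS (n - 1) (fun i => if i < m then a i else a (i + 1)) := by
  have hpeak : a (m - 1) + a (m + 1) = a m := by
    obtain ⟨c, hc⟩ := h.2 m hm1 hm2
    exact add_eq_of_eq_pnat_mul_of_lt (h.1 m (by omega) (by omega)).le hc hmax₁ hmax₂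
  refine ⟨fun i hi hin => h.pos_deleteAt m hi hin, fun i hi hin => ?_⟩
  rcases (by omega : i + 1 < m ∨ i + 1 = m ∨ i = m ∨ m < i) with him | rfl | rfl | him
  · exact h.step_deleteAt_of_succ_lt hi him (by omega)
  · exact h.step_deleteAt_pred (by omega) hm2 hpeak
  · exact h.step_deleteAt_self hm1 (by omega) hpeak
  · exact h.step_deleteAt_of_lt him (by omega)

/-- Closure: deleting a local maximum from a generalized arithmetic sequence of length
`n ≥ 3` yields a generalized arithmetic sequence (of length `n − 1`). -/
theorem gas_closure (n : ℕ) (hn : 3 ≤ n) (a : ℕ → ℝ) (h : IsGAS n a)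
    (m : ℕ) (hm1 : 2 ≤ m) (hm2 : m + 1 ≤ n)
    (hmax₁ : a (m - 1) < a m) (hmax₂ : a (m + 1) < a m) :
    IsGAS (n - 1) (fun i => if i < m then a i else a (i + 1)) :=
  gas_closure_general n a h m hm1 hm2 hmax₁ hmax₂
end

section
/- Let n ≥ 1 and let 0 = ρ_0 < ρ_1 < ⋯ < ρ_{A_n} = 1 be the Farey sequence of order n, with ρ_i = p_i/q_i in lowest terms. Then for every i with 1 ≤ i ≤ A_n − 2, k̂(T^{i}(1/n, 1)) = ( (q_i + q_{i+2})/q_{i+1} + (q_{i−1} + q_{i+1})/q_i ) / 2. -/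
/-- `ρ : ℕ → ℚ`, restricted to indices `0, …, A`, is the Farey sequence of order `n`:
the increasing enumeration of all rationals in `[0,1]` with reduced denominator at most `n`. -/
def IsFareySeq (n A : ℕ) (ρ : ℕ → ℚ) : Prop :=
  ρ 0 = 0 ∧ ρ A = 1 ∧ (∀ i j, i < j → j ≤ A → ρ i < ρ j) ∧
  (∀ i ≤ A, 0 ≤ ρ i ∧ ρ i ≤ 1 ∧ (ρ i).den ≤ n) ∧
  (∀ q : ℚ, 0 ≤ q → q ≤ 1 → q.den ≤ n → ∃ i ≤ A, ρ i = q)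

lemma Int.exists_mul_sub_mul_eq_one {a b : ℤ} (hab : IsCoprime a b) (hb : 0 < b) (m : ℤ) :
    ∃ c d : ℤ, c * b - a * d = 1 ∧ m - b < d ∧ d ≤ m := by
  obtain ⟨u, v, huv⟩ := hab
  -- `d = b ⌊(m + u)/b⌋ - u` is the representative of `-a⁻¹ ≡ -u (mod b)` in `(m - b, m]`.
  have hmod := Int.emod_def (m + u) b
  have := Int.emod_nonneg (m + u) hb.ne'
  have := Int.emod_lt_of_pos (m + u) hb
  exact ⟨v + a * ((m + u) / b), b * ((m + u) / b) - u, by linear_combination huv,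
    by linarith, by linarith⟩

lemma Int.dvd_add_of_mul_sub_mul_eq_one {p q p' q' p'' q'' : ℤ}
    (h : p' * q - p * q' = 1) (h' : p'' * q' - p' * q'' = 1) : q' ∣ q + q'' := by
  have hcop : IsCoprime q' p' := ⟨-p, q, by linear_combination h⟩
  exact hcop.dvd_of_dvd_mul_left ⟨p + p'', by linear_combination h - h'⟩

lemma Rat.add_den_le_den_of_between {x y r : ℚ} (hxy : y.num * x.den - x.num * y.den = 1)
    (hxr : x < r) (hry : r < y) : x.den + y.den ≤ r.den := by
  have e := (Rat.lt_iff x r).mp hxr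
  have e' := (Rat.lt_iff r y).mp hry
  have hr : (r.den : ℤ) = y.den * (r.num * x.den - x.num * r.den)
      + x.den * (y.num * r.den - r.num * y.den) := by
    linear_combination (-(r.den : ℤ)) * hxy
  have : (y.den : ℤ) * 1 ≤ y.den * (r.num * x.den - x.num * r.den) :=
    mul_le_mul_of_nonneg_left (by omega) (by positivity)
  have : (x.den : ℤ) * 1 ≤ x.den * (y.num * r.den - r.num * y.den) :=
    mul_le_mul_of_nonneg_left (by omega) (by positivity)
  omega

lemma Rat.exists_farey_right_neighbor {n : ℕ} {x : ℚ} (hx0 : 0 ≤ x) (hx1 : x < 1)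
    (hxn : x.den ≤ n) :
    ∃ y : ℚ, 0 ≤ y ∧ y ≤ 1 ∧ y.den ≤ n ∧ n < x.den + y.den ∧
      y.num * x.den - x.num * y.den = 1 := by
  have hb : (0 : ℤ) < x.den := by exact_mod_cast x.pos
  have ha : 0 ≤ x.num := Rat.num_nonneg.mpr hx0
  have hab : x.num < x.den := by simpa using (Rat.lt_iff x 1).mp hx1
  obtain ⟨c, d, hcd, hd_lo, hd_hi⟩ :=
    Int.exists_mul_sub_mul_eq_one (Rat.isCoprime_num_den x) hb n
  have hd : 0 < d := by omega
  have hc : 0 < c := by nlinarith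
  have hcd_le : c ≤ d := by nlinarith
  have hcop : c.natAbs.Coprime d.natAbs :=
    Int.isCoprime_iff_nat_coprime.mp ⟨x.den, -x.num, by linear_combination hcd⟩
  have hnum : ((c : ℚ) / d).num = c := Rat.num_div_eq_of_coprime hd hcop
  have hden : (((c : ℚ) / d).den : ℤ) = d := Rat.den_div_eq_of_coprime hd hcop
  have hdq : (0 : ℚ) < d := by exact_mod_cast hd
  refine ⟨c / d, by positivity, (div_le_one hdq).mpr (by exact_mod_cast hcd_le), ?_, ?_, ?_⟩
  · exact_mod_cast hden.trans_le hd_hi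
  · zify; omega
  · rw [hnum, hden]; exact hcd

lemma one_add_div_div_div {N : ℝ} (hN : N ≠ 0) (a b : ℝ) :
    (1 + a / N) / (b / N) = (N + a) / b := by
  rw [one_add_div hN, div_div_div_cancel_right₀ hN]

lemma bczT_div_eq {N a b c : ℝ} (hN : N ≠ 0) (hb : b ≠ 0)
    (h : (⌊(N + a) / b⌋ : ℝ) = (a + c) / b) : bczT (a / N, b / N) = (b / N, c / N) := by
  simp only [bczT, one_add_div_div_div hN, h, Prod.mk.injEq, true_and]
  field_simp
  ring

lemma khat_div {N : ℝ} (hN : N ≠ 0) (a b : ℝ) :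
    khat (a / N, b / N) = ((⌊(N + a) / b⌋ : ℝ) + ⌊(N + b) / a⌋) / 2 := by
  simp only [khat, one_add_div_div_div hN]

lemma floor_add_div_eq_of_dvd {n q q' q'' : ℕ} (hdvd : q' ∣ q + q'') (hq'' : q'' ≤ n)
    (hn : n < q' + q'') : (⌊((n : ℝ) + q) / q'⌋ : ℝ) = ((q : ℝ) + q'') / q' := by
  obtain ⟨k, hk⟩ := hdvd
  have hq' : (0 : ℝ) < q' := by
    exact_mod_cast Nat.pos_of_ne_zero (by rintro rfl; omega)
  have hkr : (q : ℝ) + q'' = q' * k := by exact_mod_cast hk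
  have hq''r : (q'' : ℝ) ≤ n := by exact_mod_cast hq''
  have hnr : (n : ℝ) < q' + q'' := by exact_mod_cast hn
  have hfloor : ⌊((n : ℝ) + q) / q'⌋ = k := by
    rw [Int.floor_eq_iff, le_div_iff₀ hq', div_lt_iff₀ hq']
    push_cast
    constructor <;> linarith
  rw [hfloor, hkr, mul_div_cancel_left₀ _ hq'.ne']
  rfl

namespace IsFareySeq

variable {n A : ℕ} {ρ : ℕ → ℚ}

lemma one_le (h : IsFareySeq n A ρ) : 1 ≤ n :=
  (ρ 0).pos.trans_le (h.2.2.2.1 0 (Nat.zero_le A)).2.2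

lemma succ_eq_of_forall_between (h : IsFareySeq n A ρ) {i : ℕ} (hi : i + 1 ≤ A) {y : ℚ}
    (hy0 : 0 ≤ y) (hy1 : y ≤ 1) (hyn : y.den ≤ n) (hlt : ρ i < y)
    (hgap : ∀ r, ρ i < r → r < y → n < r.den) : ρ (i + 1) = y := by
  obtain ⟨-, -, hmono, hrange, hsurj⟩ := h
  obtain ⟨j, hjA, rfl⟩ := hsurj y hy0 hy1 hyn
  have hij : i + 1 ≤ j := by
    by_contra! hji
    rcases Nat.lt_or_eq_of_le (Nat.le_of_lt_succ hji) with hji | rfl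
    · exact (hmono j i hji (by omega)).not_gt hlt
    · exact hlt.false
  rcases Nat.lt_or_eq_of_le hij with hij | hij
  · exact absurd (hrange (i + 1) hi).2.2
      (hgap _ (hmono i (i + 1) (by omega) hi) (hmono (i + 1) j hij hjA)).not_ge
  · rw [hij]

lemma det_succ_eq_one_and_lt_den_add_den (h : IsFareySeq n A ρ) {i : ℕ} (hi : i + 1 ≤ A) :
    (ρ (i + 1)).num * (ρ i).den - (ρ i).num * (ρ (i + 1)).den = 1 ∧
      n < (ρ i).den + (ρ (i + 1)).den := by
  obtain ⟨hx0, -, hxn⟩ := h.2.2.2.1 i (by omega)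
  have hx1 : ρ i < 1 := h.2.1 ▸ h.2.2.1 i A (by omega) le_rfl
  obtain ⟨y, hy0, hy1, hyn, hlt, hdet⟩ := Rat.exists_farey_right_neighbor hx0 hx1 hxn
  have hxy : ρ i < y := by
    rw [Rat.lt_iff]; omega
  rw [h.succ_eq_of_forall_between hi hy0 hy1 hyn hxy fun r hxr hry =>
    hlt.trans_le (Rat.add_den_le_den_of_between hdet hxr hry)]
  exact ⟨hdet, hlt⟩

lemma den_succ_dvd (h : IsFareySeq n A ρ) {i : ℕ} (hi : i + 2 ≤ A) :
    (ρ (i + 1)).den ∣ (ρ i).den + (ρ (i + 2)).den := by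
  exact_mod_cast Int.dvd_add_of_mul_sub_mul_eq_one
    (h.det_succ_eq_one_and_lt_den_add_den (by omega)).1
    (h.det_succ_eq_one_and_lt_den_add_den (i := i + 1) hi).1

lemma floor_add_den_div_den_succ (h : IsFareySeq n A ρ) {i : ℕ} (hi : i + 2 ≤ A) :
    (⌊((n : ℝ) + (ρ i).den) / (ρ (i + 1)).den⌋ : ℝ) =
        ((ρ i).den + (ρ (i + 2)).den : ℝ) / (ρ (i + 1)).den ∧
      (⌊((n : ℝ) + (ρ (i + 2)).den) / (ρ (i + 1)).den⌋ : ℝ) =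
        ((ρ i).den + (ρ (i + 2)).den : ℝ) / (ρ (i + 1)).den := by
  have hdvd := h.den_succ_dvd hi
  have hn : n < (ρ i).den + (ρ (i + 1)).den :=
    (h.det_succ_eq_one_and_lt_den_add_den (by omega)).2
  have hn' : n < (ρ (i + 1)).den + (ρ (i + 2)).den :=
    (h.det_succ_eq_one_and_lt_den_add_den hi).2
  refine ⟨floor_add_div_eq_of_dvd hdvd (h.2.2.2.1 _ hi).2.2 hn', ?_⟩
  rw [add_comm ((ρ i).den : ℝ)]
  exact floor_add_div_eq_of_dvd (add_comm (ρ i).den _ ▸ hdvd) (h.2.2.2.1 i (by omega)).2.2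
    (by omega)

lemma iterate_bczT (h : IsFareySeq n A ρ) {i : ℕ} (hi : i + 1 ≤ A) :
    bczT^[i] (1 / (n : ℝ), 1) = (((ρ i).den : ℝ) / n, ((ρ (i + 1)).den : ℝ) / n) := by
  have hn : (n : ℝ) ≠ 0 := by have := h.one_le; positivity
  induction i with
  | zero =>
    have hden0 : (ρ 0).den = 1 := by rw [h.1]; rfl
    have hden1 : (ρ 1).den = n := by
      have : n < (ρ 0).den + (ρ 1).den := (h.det_succ_eq_one_and_lt_den_add_den hi).2
      have := (h.2.2.2.1 1 hi).2.2
      omega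
    simp [hden0, hden1, hn]
  | succ i ih =>
    rw [Function.iterate_succ_apply', ih (by omega)]
    exact bczT_div_eq hn (by positivity) (h.floor_add_den_div_den_succ hi).1

end IsFareySeq

theorem khat_along_farey_general (n : ℕ) (ρ : ℕ → ℚ)
    (hρ : IsFareySeq n (fareyLen n) ρ) (i : ℕ) (hi : 1 ≤ i) (hi2 : i + 2 ≤ fareyLen n) :
    khat (bczT^[i] (1 / (n : ℝ), 1)) =
      ((((ρ i).den : ℝ) + ((ρ (i + 2)).den : ℝ)) / ((ρ (i + 1)).den : ℝ) +
        (((ρ (i - 1)).den : ℝ) + ((ρ (i + 1)).den : ℝ)) / ((ρ i).den : ℝ)) / 2 := by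
  obtain ⟨j, rfl⟩ : ∃ j, i = j + 1 := ⟨i - 1, by omega⟩
  have hn : (n : ℝ) ≠ 0 := by have := hρ.one_le; positivity
  rw [hρ.iterate_bczT (by omega), khat_div hn, (hρ.floor_add_den_div_den_succ hi2).1,
    (hρ.floor_add_den_div_den_succ (i := j) (by omega)).2, Nat.add_sub_cancel]

theorem khat_along_farey (n : ℕ) (hn : 1 ≤ n) (ρ : ℕ → ℚ)
    (hρ : IsFareySeq n (fareyLen n) ρ) (i : ℕ) (hi : 1 ≤ i) (hi2 : i + 2 ≤ fareyLen n) :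
    khat (bczT^[i] (1 / (n : ℝ), 1)) =
      ((((ρ i).den : ℝ) + ((ρ (i + 2)).den : ℝ)) / ((ρ (i + 1)).den : ℝ) +
        (((ρ (i - 1)).den : ℝ) + ((ρ (i + 1)).den : ℝ)) / ((ρ i).den : ℝ)) / 2 :=
  khat_along_farey_general n ρ hρ i hi hi2
end

section
/- (Existence and uniqueness of excursions.) For every pair (a,b) with 0 < a ≤ 1 and 0 < b ≤ 1, there exists an excursion ((a_i,b_i))_{i=0}^{s} of the BCZ map with a_0 = a and a_s = b, and it is unique: if ((a_i,b_i))_{i=0}^{s} and ((a'_i,b'_i))_{i=0}^{s'} are excursions with a_0 = a'_0 = a, a_s = a'_{s'} = b, then s = s' and (a_i,b_i) = (a'_i,b'_i) for all 0 ≤ i ≤ s. -/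
/-!
For an excursion from `(a, a')` to `(b, b')` one has `a' ≡ b [PMOD a]` and `b' ≡ -a [PMOD b]`.
The second coordinate of a point of `Ω` with first coordinate `x` lies in `(1 - x, 1]`, an
interval of length `x`, so these congruences pin down both endpoints; as `T` is deterministic,
the excursion is unique.

The congruences are proved by induction on the length. Splitting an excursion of length `≥ 2`
at the leftmost minimum `c` of the intermediate first coordinates, and again at the next index
whose first coordinate `d` is `≤ c`, gives excursions `a → c` and `c → d`. Comparing the two
descriptions of the second coordinate at the split point gives `-a ≡ d [PMOD c]`, which forces
`a + d = c`, hence `d < c` and the second piece ends at `b`.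

Conversely, excursions `a → a + b` and `a + b → b` glue to an excursion `a → b`, and when
`a + b > 1` a single step of `T` is one. Both pieces have endpoints at least `min a b` and
endpoint sum larger by at least `min a b`, so the recursion stops after about `1 / min a b`
levels.
-/

open AddCommGroup Set

section IntervalMod

variable {α : Type*} [AddCommGroup α] [LinearOrder α] [IsOrderedAddMonoid α] [Archimedean α]

theorem eq_of_modEq_of_mem_Ioc {p c x y : α} (hp : 0 < p) (hx : x ∈ Ioc c (c + p))
    (hy : y ∈ Ioc c (c + p)) (h : x ≡ y [PMOD p]) : x = y := by
  rw [← (toIocMod_eq_self hp).2 hx, ← (toIocMod_eq_self hp).2 hy]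
  exact (toIocMod_eq_toIocMod hp).2 (modEq_iff_zsmul'.1 h)

theorem add_eq_of_neg_modEq {a c d : α} (ha : 0 < a) (hac : a < c) (hd : 0 < d) (hdc : d ≤ c)
    (h : -a ≡ d [PMOD c]) : a + d = c := by
  have hmod : -a ≡ d - c [PMOD c] :=
    h.trans (modEq_sub_iff_add_modEq.2 (add_modEq_left.2 self_modEq_zero))
  have key : -a = d - c := eq_of_modEq_of_mem_Ioc (c := -c) (ha.trans hac)
    ⟨neg_lt_neg hac, by simpa using ha.le⟩ ⟨by simpa using hd, by simpa using hdc⟩ hmod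
  rw [eq_sub_iff_add_eq, neg_add_eq_sub, sub_eq_iff_eq_add'] at key
  exact key.symm

end IntervalMod

theorem Nat.exists_least_gt_of_lt {P : ℕ → Prop} {j k : ℕ} (hjk : j < k) (hk : P k) :
    ∃ m, j < m ∧ m ≤ k ∧ P m ∧ ∀ i, j < i → i < m → ¬ P i := by
  classical
  have h : ∃ m, j < m ∧ P m := ⟨k, hjk, hk⟩
  exact ⟨Nat.find h, (Nat.find_spec h).1, Nat.find_min' h ⟨hjk, hk⟩, (Nat.find_spec h).2,
    fun i hji him hi => Nat.find_min h him ⟨hji, hi⟩⟩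

theorem eq_of_mem_fareyTriangle_of_modEq {x y : ℝ × ℝ} (hx : x ∈ fareyTriangle)
    (hy : y ∈ fareyTriangle) (h₁ : x.1 = y.1) (h₂ : x.2 ≡ y.2 [PMOD x.1]) : x = y := by
  obtain ⟨hx0, -, -, hx2, hx3⟩ := hx
  obtain ⟨-, -, -, hy2, hy3⟩ := hy
  exact Prod.ext h₁ (eq_of_modEq_of_mem_Ioc (c := 1 - x.1) hx0
    ⟨by linarith, by linarith⟩ ⟨by linarith, by linarith⟩ h₂)

theorem bczT_snd_modEq (x : ℝ × ℝ) : (bczT x).2 ≡ -x.1 [PMOD x.2] :=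
  modEq_iff_zsmul'.2 ⟨-⌊(1 + x.1) / x.2⌋, by simp only [bczT, zsmul_eq_mul]; push_cast; ring⟩

theorem mapsTo_bczT : MapsTo bczT fareyTriangle fareyTriangle := by
  intro x ⟨ha0, ha1, hb0, hb1, hab⟩
  set k := ⌊(1 + x.1) / x.2⌋
  have hle : (k : ℝ) * x.2 ≤ 1 + x.1 := (le_div_iff₀ hb0).1 (Int.floor_le _)
  have hlt : 1 + x.1 < (k + 1) * x.2 := (div_lt_iff₀ hb0).1 (Int.lt_floor_add_one _)
  refine ⟨hb0, hb1, ?_, ?_, ?_⟩ <;> simp only [bczT] <;> linarith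

def HasExcursion (a b : ℝ) : Prop :=
  ∃ (s : ℕ) (p : ℕ → ℝ × ℝ), IsExcursion p s ∧ (p 0).1 = a ∧ (p s).1 = b

namespace IsExcursion

variable {p q : ℕ → ℝ × ℝ} {s t : ℕ}

theorem pos (hp : IsExcursion p s) : 0 < s := hp.1

theorem mem (hp : IsExcursion p s) {i : ℕ} (hi : i ≤ s) : p i ∈ fareyTriangle := hp.2.1 i hi

theorem succ_eq (hp : IsExcursion p s) {i : ℕ} (hi : i < s) : p (i + 1) = bczT (p i) :=
  hp.2.2.1 i hi

theorem lt_fst (hp : IsExcursion p s) {i : ℕ} (hi0 : 0 < i) (hi : i < s) :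
    (p 0).1 < (p i).1 ∧ (p s).1 < (p i).1 :=
  hp.2.2.2 i hi0 hi

theorem eq_iterate (hp : IsExcursion p s) : ∀ i ≤ s, p i = bczT^[i] (p 0)
  | 0, _ => rfl
  | i + 1, hi => by
    rw [hp.succ_eq hi, hp.eq_iterate i (by omega), Function.iterate_succ_apply']

theorem restrict (hp : IsExcursion p s) {u v : ℕ} (huv : u < v) (hv : v ≤ s)
    (hmid : ∀ i, u < i → i < v → (p u).1 < (p i).1 ∧ (p v).1 < (p i).1) :
    IsExcursion (fun i => p (u + i)) (v - u) := by
  refine ⟨by omega, fun i hi => hp.mem (by omega), fun i hi => hp.succ_eq (i := u + i) (by omega),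
    fun i hi0 hi => ?_⟩
  simpa [Nat.add_sub_cancel' huv.le] using hmid (u + i) (by omega) (by omega)

theorem iterate_add (hp : IsExcursion p s) (hq : IsExcursion q t) (hpq : p s = q 0) {i : ℕ}
    (hi : i ≤ t) : bczT^[s + i] (p 0) = q i := by
  rw [add_comm, Function.iterate_add_apply, ← hp.eq_iterate s le_rfl, hpq, ← hq.eq_iterate i hi]

theorem append (hp : IsExcursion p s) (hq : IsExcursion q t) (hpq : p s = q 0)
    (hs : (p 0).1 < (p s).1) (ht : (q t).1 < (q 0).1) :
    IsExcursion (fun i => bczT^[i] (p 0)) (s + t) := by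
  refine ⟨by have := hp.pos; omega, fun i _ => (mapsTo_bczT.iterate i) (hp.mem (Nat.zero_le _)),
    fun i _ => Function.iterate_succ_apply' _ _ _, fun i hi0 hi => ?_⟩
  simp only [Function.iterate_zero_apply, hp.iterate_add hq hpq le_rfl]
  rcases lt_or_ge i s with his | hsi
  · rw [← hp.eq_iterate i his.le]
    have := hp.lt_fst hi0 his
    exact ⟨this.1, by linarith [congrArg Prod.fst hpq]⟩
  · obtain ⟨k, rfl⟩ := Nat.exists_eq_add_of_le hsi
    rw [hp.iterate_add hq hpq (by omega)]
    rcases k.eq_zero_or_pos with rfl | hk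
    · exact ⟨hpq ▸ hs, ht⟩
    · have := hq.lt_fst hk (by omega)
      exact ⟨by linarith [congrArg Prod.fst hpq], this.2⟩

theorem exists_split (hp : IsExcursion p s) (hs : 2 ≤ s) :
    ∃ j k, 0 < j ∧ j < k ∧ k ≤ s ∧ IsExcursion p j ∧ IsExcursion (fun i => p (j + i)) (k - j) ∧
      (p k).1 ≤ (p j).1 ∧ (k = s ∨ (p k).1 = (p j).1) := by
  obtain ⟨j₀, hj₀, hmin₀⟩ :=
    (Finset.Ioo 0 s).exists_min_image (fun i => (p i).1) ⟨1, by simp; omega⟩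
  rw [Finset.mem_Ioo] at hj₀
  obtain ⟨j, hj0, hjj₀, hjle, hjfirst⟩ :=
    Nat.exists_least_gt_of_lt (P := fun i => (p i).1 ≤ (p j₀).1) hj₀.1 le_rfl
  have hjs : j < s := by omega
  have hmin : ∀ i, 0 < i → i < s → (p j).1 ≤ (p i).1 :=
    fun i h0 hs => hjle.trans (hmin₀ i (Finset.mem_Ioo.2 ⟨h0, hs⟩))
  obtain ⟨k, hjk, hks, hkle, hkfirst⟩ :=
    Nat.exists_least_gt_of_lt (P := fun i => (p i).1 ≤ (p j).1) hjs (hp.lt_fst hj0 hjs).2.le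
  refine ⟨j, k, hj0, hjk, hks, ?_, ?_, hkle, ?_⟩
  · simpa using hp.restrict hj0 hjs.le fun i h0 hi =>
      ⟨(hp.lt_fst h0 (by omega)).1, hjle.trans_lt (not_le.1 (hjfirst i h0 hi))⟩
  · exact hp.restrict hjk hks fun i hji hik =>
      ⟨not_le.1 (hkfirst i hji hik), hkle.trans_lt (not_le.1 (hkfirst i hji hik))⟩
  · rcases hks.lt_or_eq with hks | hks
    · exact Or.inr (le_antisymm hkle (hmin k (by omega) hks))
    · exact Or.inl hks

theorem snd_modEq (hp : IsExcursion p s) :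
    (p 0).2 ≡ (p s).1 [PMOD (p 0).1] ∧ (p s).2 ≡ -(p 0).1 [PMOD (p s).1] := by
  induction s using Nat.strong_induction_on generalizing p with
  | _ s ih =>
  rcases (show 1 ≤ s from hp.pos).eq_or_lt with rfl | hs
  · rw [hp.succ_eq one_pos]
    exact ⟨modEq_refl _, bczT_snd_modEq _⟩
  obtain ⟨j, k, hj0, hjk, hks, hl, hr, hkj, hk⟩ := hp.exists_split hs
  obtain ⟨hl₀, hlj⟩ := ih j (by omega) hl
  obtain ⟨hrj, hrk⟩ := ih (k - j) (by omega) hr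
  simp only [add_zero, Nat.add_sub_cancel' hjk.le] at hrj hrk
  have ha := (hp.mem (Nat.zero_le _)).1
  have hsum : (p 0).1 + (p k).1 = (p j).1 := add_eq_of_neg_modEq ha
    (hp.lt_fst hj0 (by omega)).1 (hp.mem hks).1 hkj (hlj.symm.trans hrj)
  obtain rfl : k = s := hk.resolve_right fun h => by linarith
  rw [← hsum] at hl₀ hrk
  exact ⟨hl₀.trans (add_modEq_right.2 self_modEq_zero),
    hrk.trans (neg_modEq_neg.2 (add_modEq_left.2 self_modEq_zero))⟩

theorem start_eq (hp : IsExcursion p s) (hq : IsExcursion q t) (h₀ : (p 0).1 = (q 0).1)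
    (hs : (p s).1 = (q t).1) : p 0 = q 0 := by
  have hq₀ := hq.snd_modEq.1
  rw [← h₀, ← hs] at hq₀
  exact eq_of_mem_fareyTriangle_of_modEq (hp.mem (Nat.zero_le _)) (hq.mem (Nat.zero_le _)) h₀
    (hp.snd_modEq.1.trans hq₀.symm)

theorem length_le (hp : IsExcursion p s) (hq : IsExcursion q t)
    (hpq : ∀ i ≤ s, i ≤ t → p i = q i) (hs : (p s).1 = (q t).1) : s ≤ t := by
  by_contra! h
  have := (hp.lt_fst hq.pos h).2
  rw [hpq t h.le le_rfl, hs] at this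
  exact lt_irrefl _ this

theorem unique (hp : IsExcursion p s) (hq : IsExcursion q t) (h₀ : (p 0).1 = (q 0).1)
    (hs : (p s).1 = (q t).1) : s = t ∧ ∀ i ≤ s, p i = q i := by
  have hpq : ∀ i ≤ s, i ≤ t → p i = q i := fun i his hit => by
    rw [hp.eq_iterate i his, hq.eq_iterate i hit, hp.start_eq hq h₀ hs]
  obtain rfl : s = t := le_antisymm (hp.length_le hq hpq hs)
    (hq.length_le hp (fun i hit his => (hpq i his hit).symm) hs.symm)
  exact ⟨rfl, fun i hi => hpq i hi hi⟩

end IsExcursion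

theorem hasExcursion_of_mem {a b : ℝ} (h : (a, b) ∈ fareyTriangle) : HasExcursion a b :=
  ⟨1, fun i => bczT^[i] (a, b),
    ⟨le_rfl, fun i _ => mapsTo_bczT.iterate i h, fun i _ => Function.iterate_succ_apply' _ _ _,
      fun i hi0 hi => by omega⟩, rfl, rfl⟩

theorem HasExcursion.of_add {a b : ℝ} (ha : 0 < a) (hb : 0 < b) (h₁ : HasExcursion a (a + b))
    (h₂ : HasExcursion (a + b) b) : HasExcursion a b := by
  obtain ⟨s, p, hp, hp₀, hps⟩ := h₁
  obtain ⟨t, q, hq, hq₀, hqt⟩ := h₂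
  have hjoin : p s = q 0 := by
    have hps' := hp.snd_modEq.2
    have hq₀' := hq.snd_modEq.1
    rw [hp₀, hps] at hps'
    rw [hq₀, hqt] at hq₀'
    refine eq_of_mem_fareyTriangle_of_modEq (hp.mem le_rfl) (hq.mem (Nat.zero_le _))
      (hps.trans hq₀.symm) ?_
    have hab : -a ≡ b [PMOD a + b] := modEq_iff_zsmul'.2 ⟨1, by rw [one_zsmul]; abel⟩
    rw [hps]
    exact hps'.trans (hab.trans hq₀'.symm)
  refine ⟨s + t, _, hp.append hq hjoin (by linarith) (by linarith), hp₀, ?_⟩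
  rw [hp.iterate_add hq hjoin le_rfl, hqt]

theorem HasExcursion.of_lt_add_mul {ε a b : ℝ} (hε : 0 < ε) (ha : ε ≤ a) (ha1 : a ≤ 1)
    (hb : ε ≤ b) (hb1 : b ≤ 1) (n : ℕ) (h : 1 < a + b + n * ε) : HasExcursion a b := by
  induction n generalizing a b with
  | zero => exact hasExcursion_of_mem ⟨by linarith, ha1, by linarith, hb1, by simpa using h⟩
  | succ n ih =>
    rcases lt_or_ge 1 (a + b) with hab | hab
    · exact hasExcursion_of_mem ⟨by linarith, ha1, by linarith, hb1, hab⟩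
    push_cast at h
    exact .of_add (by linarith) (by linarith)
      (ih ha ha1 (by linarith) hab (by linarith)) (ih (by linarith) hab hb hb1 (by linarith))

theorem hasExcursion {a b : ℝ} (ha0 : 0 < a) (ha1 : a ≤ 1) (hb0 : 0 < b) (hb1 : b ≤ 1) :
    HasExcursion a b := by
  have hε : 0 < min a b := lt_min ha0 hb0
  obtain ⟨n, hn⟩ := exists_nat_gt (1 / min a b)
  rw [div_lt_iff₀ hε] at hn
  exact .of_lt_add_mul hε (min_le_left a b) ha1 (min_le_right a b) hb1 n (by linarith)

theorem excursion_exists_unique (a b : ℝ) (ha0 : 0 < a) (ha1 : a ≤ 1)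
    (hb0 : 0 < b) (hb1 : b ≤ 1) :
    (∃ (s : ℕ) (p : ℕ → ℝ × ℝ), IsExcursion p s ∧ (p 0).1 = a ∧ (p s).1 = b) ∧
      (∀ (s s' : ℕ) (p p' : ℕ → ℝ × ℝ), IsExcursion p s → IsExcursion p' s' →
        (p 0).1 = a → (p s).1 = b → (p' 0).1 = a → (p' s').1 = b →
        s = s' ∧ ∀ i ≤ s, p i = p' i) :=
  ⟨hasExcursion ha0 ha1 hb0 hb1, fun _ _ _ _ hp hp' h₀ hs h₀' hs' =>
    hp.unique hp' (h₀.trans h₀'.symm) (hs.trans hs'.symm)⟩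
end
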